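/- arXiv:0810.1059 — 2 statements merged into one kernel-verified Lean document; each statement's English description precedes it below -/
import Mathlib

section
/- For μ > 0, define φ_μ(z) = (1/Γ(μ+1))·(z^μ e^{−z} − z^{2μ} ∫_z^∞ u^{−μ} e^{−u} du) for z > 0. Then z maximizes φ_μ if and only if 1/(2z) = ∫_0^∞ (1+h)^{−μ} e^{−hz} dh, and this equation has a unique positive solution z_μ. -/
/-!
The substitution `u = z + t` gives `∫_z^∞ u^{-μ} e^{-u} du = z^{-μ} e^{-z} G(z)` with
`G(z) = ∫_0^∞ (1 + t/z)^{-μ} e^{-t} dt`, and `t = hz` gives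
`G(z) = z ∫_0^∞ (1+h)^{-μ} e^{-hz} dh`, so the equation says `G(z) = 1/2`. Differentiating,
`φ_μ'(z) = μ z^{μ-1} e^{-z} (1 - 2 G(z)) / Γ(μ+1)`. The integrand of `G` is strictly
increasing in `z`, so `G` is strictly increasing; by dominated convergence it is continuous with
`G(0+) = 0` and `G(∞) = 1`. Hence `φ_μ'` changes sign exactly once, from `+` to `-`, at the
unique solution of `G(z) = 1/2`.
-/

open MeasureTheory

/-- `φ_μ(z) = (1/Γ(μ+1)) (z^μ e^{−z} − z^{2μ} ∫_z^∞ u^{−μ} e^{−u} du)`. -/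
noncomputable def phiBessel (μ z : ℝ) : ℝ :=
  (1 / Real.Gamma (μ + 1))
    * (z ^ μ * Real.exp (-z) - z ^ (2 * μ) * ∫ u in Set.Ioi z, u ^ (-μ) * Real.exp (-u))

open Set Real Filter Topology

theorem integral_comp_add_right_Ioi {E : Type*} [NormedAddCommGroup E] [NormedSpace ℝ E]
    (f : ℝ → E) (a : ℝ) : ∫ x in Ioi 0, f (x + a) = ∫ x in Ioi a, f x := by
  simpa using (measurePreserving_add_right volume a).setIntegral_preimage_emb
    (measurableEmbedding_addRight a) f (Ioi a)

theorem hasDerivAt_integral_Ioi {E : Type*} [NormedAddCommGroup E] [NormedSpace ℝ E]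
    [CompleteSpace E] {f : ℝ → E} {a z : ℝ} (hf : IntegrableOn f (Ioi a)) (haz : a < z)
    (hmeas : StronglyMeasurableAtFilter f (𝓝 z)) (hcont : ContinuousAt f z) :
    HasDerivAt (fun x => ∫ u in Ioi x, f u) (-f z) z := by
  have hsplit : (fun x => ∫ u in Ioi x, f u) =ᶠ[𝓝 z]
      fun x => (∫ u in Ioi a, f u) - ∫ u in a..x, f u := by
    filter_upwards [Ioi_mem_nhds haz] with x hx
    rw [← intervalIntegral.integral_Ioi_sub_Ioi hf (le_of_lt hx), sub_sub_cancel]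
  have hint : IntervalIntegrable f volume a z :=
    (intervalIntegrable_iff_integrableOn_Ioc_of_le haz.le).2 (hf.mono_set Ioc_subset_Ioi_self)
  simpa using ((intervalIntegral.integral_hasDerivAt_right hint hmeas hcont).const_sub
    (∫ u in Ioi a, f u)).congr_of_eventuallyEq hsplit

theorem setIntegral_lt_setIntegral_of_forall_lt {X : Type*} [MeasurableSpace X]
    {μ : Measure X} {s : Set X} {f g : X → ℝ} (hs : MeasurableSet s) (hμs : μ s ≠ 0)
    (hf : IntegrableOn f s μ) (hg : IntegrableOn g s μ) (hlt : ∀ x ∈ s, f x < g x) :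
    ∫ x in s, f x ∂μ < ∫ x in s, g x ∂μ := by
  have hsupp : Function.support (g - f) ∩ s = s :=
    inter_eq_right.2 fun x hx => (sub_pos.2 (hlt x hx)).ne'
  have hnonneg : 0 ≤ᵐ[μ.restrict s] g - f := by
    filter_upwards [ae_restrict_mem hs] with x hx
    exact (sub_pos.2 (hlt x hx)).le
  rw [← sub_pos, ← integral_sub hg hf]
  refine (setIntegral_pos_iff_support_of_nonneg_ae hnonneg (hg.sub hf)).2 ?_
  rw [hsupp]
  exact pos_iff_ne_zero.2 hμs

theorem isMaxOn_Ioi_iff_of_hasDerivAt {f p g : ℝ → ℝ} {a c z : ℝ}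
    (hf : ∀ x ∈ Ioi a, HasDerivAt f (p x * (c - g x)) x) (hp : ∀ x ∈ Ioi a, 0 < p x)
    (hg : StrictMonoOn g (Ioi a)) (hz : a < z) :
    IsMaxOn f (Ioi a) z ↔ g z = c := by
  constructor
  · intro hmax
    have h0 := (hmax.isLocalMax (Ioi_mem_nhds hz)).hasDerivAt_eq_zero (hf z hz)
    rcases mul_eq_zero.1 h0 with h | h
    · exact absurd h (hp z hz).ne'
    · linarith
  · intro hgz
    have hcont : ContinuousOn f (Ioi a) := fun x hx => (hf x hx).continuousAt.continuousWithinAt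
    have hmono : MonotoneOn f (Ioc a z) := by
      refine monotoneOn_of_hasDerivWithinAt_nonneg (f' := fun x => p x * (c - g x))
        (convex_Ioc a z) (hcont.mono Ioc_subset_Ioi_self) (fun x hx => ?_) fun x hx => ?_
      · rw [interior_Ioc] at hx
        exact (hf x hx.1).hasDerivWithinAt
      · rw [interior_Ioc] at hx
        exact (mul_pos (hp x hx.1) (by linarith [hg hx.1 hz hx.2])).le
    have hanti : AntitoneOn f (Ici z) := by
      refine antitoneOn_of_hasDerivWithinAt_nonpos (f' := fun x => p x * (c - g x))
        (convex_Ici z) (hcont.mono (Ici_subset_Ioi.2 hz)) (fun x hx => ?_) fun x hx => ?_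
      · rw [interior_Ici] at hx
        exact (hf x (hz.trans hx)).hasDerivWithinAt
      · rw [interior_Ici] at hx
        exact (mul_neg_of_pos_of_neg (hp x (hz.trans hx))
          (by linarith [hg hz (hz.trans hx) hx])).le
    intro x hx
    rcases le_total x z with hxz | hzx
    · exact hmono ⟨hx, hxz⟩ ⟨hz, le_rfl⟩ hxz
    · exact hanti self_mem_Ici hzx hzx

theorem integrableOn_Ioi_rpow_mul_exp_neg {s a : ℝ} (hs : s ≤ 0) (ha : 0 < a) :
    IntegrableOn (fun u => u ^ s * exp (-u)) (Ioi a) := by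
  refine Integrable.mono' ((exp_neg_integrableOn_Ioi a one_pos).const_mul (a ^ s))
    (by fun_prop) ?_
  filter_upwards [ae_restrict_mem measurableSet_Ioi] with u hu
  have hu0 : 0 < u := ha.trans hu
  rw [norm_of_nonneg (by positivity), neg_one_mul]
  exact mul_le_mul_of_nonneg_right (rpow_le_rpow_of_nonpos ha hu.le hs) (exp_pos _).le

noncomputable def gammaTailRatio (μ z : ℝ) : ℝ :=
  ∫ t in Ioi 0, (1 + t / z) ^ (-μ) * exp (-t)

theorem integral_Ioi_rpow_neg_mul_exp_neg {μ z : ℝ} (hz : 0 < z) :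
    ∫ u in Ioi z, u ^ (-μ) * exp (-u) = z ^ (-μ) * exp (-z) * gammaTailRatio μ z := by
  rw [gammaTailRatio, ← integral_const_mul, ← integral_comp_add_right_Ioi]
  refine setIntegral_congr_fun measurableSet_Ioi fun t ht => ?_
  have ht : 0 ≤ t := le_of_lt ht
  rw [show t + z = z * (1 + t / z) by field_simp; ring, mul_rpow hz.le (by positivity),
    show -(z * (1 + t / z)) = -z + -t by field_simp; ring, exp_add]
  ring

theorem gammaTailRatio_eq_mul_integral {μ z : ℝ} (hz : 0 < z) :
    gammaTailRatio μ z = z * ∫ h in Ioi 0, (1 + h) ^ (-μ) * exp (-h * z) := by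
  have h := integral_comp_mul_left_Ioi (fun t => (1 + t / z) ^ (-μ) * exp (-t)) 0 hz
  simp only [mul_zero, smul_eq_mul] at h
  rw [gammaTailRatio, ← mul_inv_cancel_left₀ hz.ne' (∫ t in Ioi 0, _), ← h]
  congr 1
  refine setIntegral_congr_fun measurableSet_Ioi fun t _ => ?_
  rw [mul_div_cancel_left₀ t hz.ne', mul_comm z t, neg_mul]

theorem norm_one_add_div_rpow_neg_mul_exp_neg_le {μ z t : ℝ} (hμ : 0 ≤ μ) (hz : 0 < z)
    (ht : 0 ≤ t) : ‖(1 + t / z) ^ (-μ) * exp (-t)‖ ≤ exp (-t) := by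
  have hle : (1 + t / z) ^ (-μ) ≤ 1 :=
    rpow_le_one_of_one_le_of_nonpos (by linarith [div_nonneg ht hz.le]) (neg_nonpos.2 hμ)
  rw [norm_of_nonneg (by positivity)]
  exact mul_le_of_le_one_left (exp_pos _).le hle

theorem integrableOn_one_add_div_rpow_neg_mul_exp_neg {μ z : ℝ} (hμ : 0 ≤ μ) (hz : 0 < z) :
    IntegrableOn (fun t => (1 + t / z) ^ (-μ) * exp (-t)) (Ioi 0) := by
  refine Integrable.mono' (integrableOn_exp_neg_Ioi 0) (by fun_prop) ?_
  filter_upwards [ae_restrict_mem measurableSet_Ioi] with t ht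
  exact norm_one_add_div_rpow_neg_mul_exp_neg_le hμ hz (le_of_lt ht)

theorem gammaTailRatio_strictMonoOn {μ : ℝ} (hμ : 0 < μ) :
    StrictMonoOn (gammaTailRatio μ) (Ioi 0) := by
  intro z₁ hz₁ z₂ hz₂ h12
  refine setIntegral_lt_setIntegral_of_forall_lt measurableSet_Ioi (by simp)
    (integrableOn_one_add_div_rpow_neg_mul_exp_neg hμ.le hz₁)
    (integrableOn_one_add_div_rpow_neg_mul_exp_neg hμ.le hz₂) fun t ht => ?_
  have ht : 0 < t := ht
  have hz₁ : 0 < z₁ := hz₁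
  have hz₂ : 0 < z₂ := hz₂
  have hlt : 1 + t / z₂ < 1 + t / z₁ := by gcongr
  exact mul_lt_mul_of_pos_right (rpow_lt_rpow_of_neg (by positivity) hlt (neg_lt_zero.2 hμ))
    (exp_pos _)

theorem tendsto_gammaTailRatio {μ : ℝ} (hμ : 0 ≤ μ) {l : Filter ℝ} [l.IsCountablyGenerated]
    {g : ℝ → ℝ} (hl : ∀ᶠ z in l, 0 < z)
    (hg : ∀ t > 0, Tendsto (fun z => (1 + t / z) ^ (-μ)) l (𝓝 (g t))) :
    Tendsto (gammaTailRatio μ) l (𝓝 (∫ t in Ioi 0, g t * exp (-t))) := by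
  refine tendsto_integral_filter_of_dominated_convergence (fun t => exp (-t))
    (Eventually.of_forall fun z => by fun_prop) ?_
    (integrableOn_exp_neg_Ioi 0) ?_
  · filter_upwards [hl] with z hz
    filter_upwards [ae_restrict_mem measurableSet_Ioi] with t ht
    exact norm_one_add_div_rpow_neg_mul_exp_neg_le hμ hz (le_of_lt ht)
  · filter_upwards [ae_restrict_mem measurableSet_Ioi] with t ht
    exact (hg t ht).mul_const _

theorem continuousOn_gammaTailRatio {μ : ℝ} (hμ : 0 ≤ μ) :
    ContinuousOn (gammaTailRatio μ) (Ioi 0) := by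
  intro z hz
  have hz : 0 < z := hz
  refine (tendsto_gammaTailRatio hμ (eventually_gt_nhds hz) fun t ht => ?_).mono_left
    nhdsWithin_le_nhds
  exact ((continuousAt_const.add (continuousAt_const.div continuousAt_id hz.ne')).rpow_const
    (Or.inl (show 1 + t / z ≠ 0 by positivity))).tendsto

theorem tendsto_gammaTailRatio_nhdsGT_zero {μ : ℝ} (hμ : 0 < μ) :
    Tendsto (gammaTailRatio μ) (𝓝[>] 0) (𝓝 0) := by
  simpa using tendsto_gammaTailRatio hμ.le (self_mem_nhdsWithin : Ioi (0 : ℝ) ∈ 𝓝[>] 0)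
    fun t ht => (tendsto_rpow_neg_atTop hμ).comp (tendsto_atTop_add_const_left _ 1
      (tendsto_inv_nhdsGT_zero.const_mul_atTop ht))

theorem tendsto_gammaTailRatio_atTop {μ : ℝ} (hμ : 0 ≤ μ) :
    Tendsto (gammaTailRatio μ) atTop (𝓝 1) := by
  have hrpow : ContinuousAt (fun x : ℝ => x ^ (-μ)) 1 :=
    continuousAt_rpow_const 1 (-μ) (Or.inl one_ne_zero)
  simpa only [one_mul, integral_exp_neg_Ioi_zero] using
    tendsto_gammaTailRatio (g := fun _ => 1) hμ (eventually_gt_atTop 0) fun t _ => by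
      have hbase : Tendsto (fun z => 1 + t / z) atTop (𝓝 1) := by
        simpa using (tendsto_const_nhds.div_atTop tendsto_id).const_add (1 : ℝ)
      have hcomp := hrpow.tendsto.comp hbase
      rwa [one_rpow] at hcomp

theorem exists_gammaTailRatio_eq_half {μ : ℝ} (hμ : 0 < μ) :
    ∃ z, 0 < z ∧ gammaTailRatio μ z = 1 / 2 := by
  obtain ⟨a, haG, ha⟩ := (((tendsto_gammaTailRatio_nhdsGT_zero hμ).eventually_lt_const
    one_half_pos).and self_mem_nhdsWithin).exists
  obtain ⟨b, hbG, hab⟩ := (((tendsto_gammaTailRatio_atTop hμ.le).eventually_const_lt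
    one_half_lt_one).and (eventually_gt_atTop a)).exists
  have ha : 0 < a := ha
  obtain ⟨z, hz, hzG⟩ := intermediate_value_Ioo hab.le
    ((continuousOn_gammaTailRatio hμ.le).mono (Icc_subset_Ioi_iff hab.le |>.2 ha)) ⟨haG, hbG⟩
  exact ⟨z, ha.trans hz.1, hzG⟩

theorem hasDerivAt_phiBessel {μ z : ℝ} (hμ : 0 ≤ μ) (hz : 0 < z) :
    HasDerivAt (phiBessel μ)
      (μ * z ^ (μ - 1) * exp (-z) / Gamma (μ + 1) * (1 - 2 * gammaTailRatio μ z)) z := by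
  have htail : HasDerivAt (fun x => ∫ u in Ioi x, u ^ (-μ) * exp (-u))
      (-(z ^ (-μ) * exp (-z))) z :=
    hasDerivAt_integral_Ioi (integrableOn_Ioi_rpow_mul_exp_neg (neg_nonpos.2 hμ) (half_pos hz))
      (half_lt_self hz) (by fun_prop : Measurable _).stronglyMeasurable.stronglyMeasurableAtFilter
      ((continuousAt_rpow_const z (-μ) (Or.inl hz.ne')).mul (by fun_prop))
  have h := (((hasDerivAt_rpow_const (p := μ) (Or.inl hz.ne')).mul (hasDerivAt_neg z).exp).sub
    ((hasDerivAt_rpow_const (p := 2 * μ) (Or.inl hz.ne')).mul htail)).const_mul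
    (1 / Gamma (μ + 1))
  refine h.congr_deriv ?_
  have hpow₁ : z ^ (2 * μ) * z ^ (-μ) = z ^ μ := by rw [← rpow_add hz]; ring_nf
  have hpow₂ : z ^ (2 * μ - 1) * z ^ (-μ) = z ^ (μ - 1) := by rw [← rpow_add hz]; ring_nf
  rw [integral_Ioi_rpow_neg_mul_exp_neg hz]
  linear_combination (exp (-z) / Gamma (μ + 1)) * hpow₁
    - (2 * μ * exp (-z) * gammaTailRatio μ z / Gamma (μ + 1)) * hpow₂

/-- For `μ > 0`, `z > 0` maximizes `φ_μ` on `(0,∞)` iff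
`1/(2z) = ∫_0^∞ (1+h)^{−μ} e^{−hz} dh`, and this equation has a unique positive
solution `z_μ`. -/
theorem isMaxOn_phiBessel_iff_and_existsUnique (μ : ℝ) (hμ : 0 < μ) :
    (∀ z > (0 : ℝ),
        (IsMaxOn (phiBessel μ) (Set.Ioi 0) z ↔
          1 / (2 * z) = ∫ h in Set.Ioi (0 : ℝ), (1 + h) ^ (-μ) * Real.exp (-h * z))) ∧
      ∃! z : ℝ, 0 < z ∧
        1 / (2 * z) = ∫ h in Set.Ioi (0 : ℝ), (1 + h) ^ (-μ) * Real.exp (-h * z) := by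
  have hcond : ∀ z > (0 : ℝ), 1 / (2 * z) = ∫ h in Ioi 0, (1 + h) ^ (-μ) * exp (-h * z) ↔
      2 * gammaTailRatio μ z = 1 := fun z hz => by
    rw [gammaTailRatio_eq_mul_integral hz]
    field_simp
    constructor <;> intro h <;> linarith
  have hmono : StrictMonoOn (fun z => 2 * gammaTailRatio μ z) (Ioi 0) :=
    fun x hx y hy hxy => by linarith [gammaTailRatio_strictMonoOn hμ hx hy hxy]
  refine ⟨fun z hz => ?_, ?_⟩
  · rw [hcond z hz]
    exact isMaxOn_Ioi_iff_of_hasDerivAt (fun x hx => hasDerivAt_phiBessel hμ.le hx)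
      (fun x (hx : 0 < x) => by positivity) hmono hz
  · obtain ⟨z, hz, hzG⟩ := exists_gammaTailRatio_eq_half hμ
    refine ⟨z, ⟨hz, (hcond z hz).2 (by linarith)⟩, fun y ⟨hy, hyI⟩ => ?_⟩
    exact hmono.injOn hy hz (by rw [(hcond y hy).1 hyI]; linarith)
end

section
/- Let R be a Bessel process of dimension d = 2(μ+1), μ > 0, started at 0, and a, t > 0. Then E[(1 ∧ (a/R_t)^{2μ})·(1 − 1 ∧ (a/R_t)^{2μ})] = φ_μ(a²/(2t)), where φ_μ(z) = (1/Γ(μ+1))·(z^μ e^{−z} − z^{2μ} ∫_z^∞ u^{−μ} e^{−u} du). -/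
/-!
Proof. By the law of `R_t`, the expectation is `E[f(√(2tγ))]` with `γ ~ Gamma(μ+1, 1)` and
`f(y) = (1 ∧ (a/y)^{2μ})(1 − 1 ∧ (a/y)^{2μ})`. Since `(a/√(2tx))^{2μ} = (z/x)^μ` with
`z = a²/(2t)`, the integrand vanishes for `x ≤ z`, and for `x > z` the density `x^μ e^{-x}/Γ(μ+1)`
times `(z/x)^μ (1 − (z/x)^μ)` is `(z^μ − z^{2μ} x^{-μ}) e^{-x}/Γ(μ+1)`; integrating over `(z, ∞)`
gives `φ_μ(z)`.
-/

open MeasureTheory ProbabilityTheory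

open Set Real

theorem ProbabilityTheory.IdentDistrib.of_map_eq_map {α β γ : Type*} [MeasurableSpace α]
    [MeasurableSpace β] [MeasurableSpace γ] {X : α → γ} {Y : β → γ} {P : Measure α}
    {Q : Measure β} [IsProbabilityMeasure Q] (hY : AEMeasurable Y Q) (h : P.map X = Q.map Y) :
    IdentDistrib X Y P Q where
  aemeasurable_fst := .of_map_ne_zero <| h ▸ (Measure.isProbabilityMeasure_map hY).ne_zero
  aemeasurable_snd := hY
  map_eq := h

theorem integral_gammaMeasure {E : Type*} [NormedAddCommGroup E] [NormedSpace ℝ E] {a r : ℝ}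
    (ha : 0 < a) (hr : 0 < r) (g : ℝ → E) :
    ∫ x, g x ∂gammaMeasure a r = ∫ x, gammaPDFReal a r x • g x := by
  rw [gammaMeasure, integral_withDensity_eq_integral_toReal_smul
    (f := gammaPDF a r) (measurable_gammaPDFReal a r).ennreal_ofReal
    (.of_forall fun _ ↦ ENNReal.ofReal_lt_top)]
  congr 1 with x
  rw [gammaPDF, ENNReal.toReal_ofReal (gammaPDFReal_nonneg ha hr x)]

theorem gammaPDFReal_one_of_nonneg {a x : ℝ} (hx : 0 ≤ x) :
    gammaPDFReal a 1 x = 1 / Gamma a * (x ^ (a - 1) * exp (-x)) := by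
  simp only [gammaPDFReal, if_pos hx, one_rpow, one_mul]
  ring

theorem gammaPDFReal_of_nonpos {a r x : ℝ} (ha : 1 < a) (hx : x ≤ 0) :
    gammaPDFReal a r x = 0 := by
  rcases hx.lt_or_eq with hx | rfl
  · simp [gammaPDFReal, not_le.mpr hx]
  · simp [gammaPDFReal, zero_rpow (sub_pos.mpr ha).ne']

theorem integrableOn_rpow_neg_mul_exp_neg_Ioi {μ z : ℝ} (hμ : 0 ≤ μ) (hz : 0 < z) :
    IntegrableOn (fun u ↦ u ^ (-μ) * exp (-u)) (Ioi z) := by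
  have hexp : IntegrableOn (fun u ↦ exp (-u)) (Ioi z) := by
    simpa using exp_neg_integrableOn_Ioi z one_pos
  refine (hexp.const_mul (z ^ (-μ))).mono' (by fun_prop) <|
    (ae_restrict_iff' measurableSet_Ioi).mpr <| .of_forall fun u (hu : z < u) ↦ ?_
  have hu0 : 0 < u := hz.trans hu
  rw [norm_of_nonneg (by positivity)]
  exact mul_le_mul_of_nonneg_right (rpow_le_rpow_of_nonpos hz hu.le (neg_nonpos.mpr hμ))
    (exp_nonneg _)

theorem phiBessel_eq_integral {μ z : ℝ} (hμ : 0 ≤ μ) (hz : 0 < z) :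
    phiBessel μ z =
      1 / Gamma (μ + 1) *
        ∫ u in Ioi z, z ^ μ * exp (-u) - z ^ (2 * μ) * (u ^ (-μ) * exp (-u)) := by
  have hexp : IntegrableOn (fun u ↦ exp (-u)) (Ioi z) := by
    simpa using exp_neg_integrableOn_Ioi z one_pos
  rw [integral_sub (hexp.const_mul _)
    ((integrableOn_rpow_neg_mul_exp_neg_Ioi hμ hz).const_mul _), integral_const_mul,
    integral_const_mul, integral_exp_neg_Ioi, phiBessel]

theorem div_sqrt_rpow_two_mul {a t x : ℝ} (μ : ℝ) (ha : 0 ≤ a) (ht : 0 ≤ t) (hx : 0 ≤ x) :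
    (a / √(2 * t * x)) ^ (2 * μ) = (a ^ 2 / (2 * t) / x) ^ μ := by
  rw [rpow_mul (by positivity), rpow_two, div_pow, sq_sqrt (by positivity), div_div]

theorem rpow_mul_min_one_mul_one_sub_min_one {μ z x : ℝ} (hμ : 0 ≤ μ) (hz : 0 ≤ z)
    (hx : 0 < x) :
    x ^ μ * (min 1 ((z / x) ^ μ) * (1 - min 1 ((z / x) ^ μ))) =
      (Ioi z).indicator (fun x ↦ z ^ μ - z ^ (2 * μ) * x ^ (-μ)) x := by
  rcases le_or_gt x z with hxz | hzx
  · have hge : 1 ≤ (z / x) ^ μ := one_le_rpow ((one_le_div hx).mpr hxz) hμ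
    rw [min_eq_left hge, indicator_of_notMem (show x ∉ Ioi z from not_lt.mpr hxz)]
    ring
  · have hle : (z / x) ^ μ ≤ 1 := rpow_le_one (by positivity) ((div_le_one hx).mpr hzx.le) hμ
    have hquot : (z / x) ^ μ = z ^ μ * x ^ (-μ) := by
      rw [div_rpow hz hx.le, rpow_neg hx.le, div_eq_mul_inv]
    have hcancel : x ^ μ * x ^ (-μ) = 1 := by rw [← rpow_add hx, add_neg_cancel, rpow_zero]
    rw [min_eq_right hle, indicator_of_mem (mem_Ioi.mpr hzx), hquot, mul_comm 2 μ,
      rpow_mul hz, rpow_two]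
    linear_combination (z ^ μ - z ^ μ * z ^ μ * x ^ (-μ)) * hcancel

theorem gammaPDFReal_mul_lastPassage {μ a t x : ℝ} (hμ : 0 < μ) (ha : 0 ≤ a) (ht : 0 < t) :
    gammaPDFReal (μ + 1) 1 x *
        (min 1 ((a / √(2 * t * x)) ^ (2 * μ)) * (1 - min 1 ((a / √(2 * t * x)) ^ (2 * μ)))) =
      1 / Gamma (μ + 1) * (Ioi (a ^ 2 / (2 * t))).indicator
        (fun u ↦ (a ^ 2 / (2 * t)) ^ μ * exp (-u)
          - (a ^ 2 / (2 * t)) ^ (2 * μ) * (u ^ (-μ) * exp (-u))) x := by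
  have hz : 0 ≤ a ^ 2 / (2 * t) := by positivity
  rcases le_or_gt x 0 with hx | hx
  · rw [gammaPDFReal_of_nonpos (lt_add_of_pos_left 1 hμ) hx,
      indicator_of_notMem (show x ∉ Ioi _ from not_lt.mpr (hx.trans hz))]
    ring
  · have key := rpow_mul_min_one_mul_one_sub_min_one hμ.le hz hx
    rw [gammaPDFReal_one_of_nonneg hx.le, add_sub_cancel_right,
      div_sqrt_rpow_two_mul μ ha ht.le hx.le]
    by_cases hzx : x ∈ Ioi (a ^ 2 / (2 * t))
    · rw [indicator_of_mem hzx] at key ⊢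
      linear_combination 1 / Gamma (μ + 1) * exp (-x) * key
    · rw [indicator_of_notMem hzx] at key ⊢
      linear_combination 1 / Gamma (μ + 1) * exp (-x) * key

theorem expectation_bessel_last_passage_eq_phiBessel_general
    {Ω : Type*} {m0 : MeasurableSpace Ω} (P : Measure Ω)
    (μ : ℝ) (hμ : 0 < μ) (a t : ℝ) (ha : 0 < a) (ht : 0 < t)
    (R : ℝ → Ω → ℝ)
    (hlaw : Measure.map (R t) P
      = Measure.map (fun x : ℝ => Real.sqrt (2 * t * x)) (gammaMeasure (μ + 1) 1)) :
    ∫ ω, (min 1 ((a / R t ω) ^ (2 * μ))) * (1 - min 1 ((a / R t ω) ^ (2 * μ))) ∂P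
      = phiBessel μ (a ^ 2 / (2 * t)) := by
  have hμ1 : 0 < μ + 1 := by linarith
  have := isProbabilityMeasure_gammaMeasure hμ1 one_pos
  let f : ℝ → ℝ := fun y ↦ min 1 ((a / y) ^ (2 * μ)) * (1 - min 1 ((a / y) ^ (2 * μ)))
  have hf : Measurable f := by fun_prop
  have hident := IdentDistrib.of_map_eq_map (by fun_prop) hlaw
  calc ∫ ω, f (R t ω) ∂P
      = ∫ x, f √(2 * t * x) ∂gammaMeasure (μ + 1) 1 := (hident.comp hf).integral_eq
    _ = ∫ x, gammaPDFReal (μ + 1) 1 x • f √(2 * t * x) := integral_gammaMeasure hμ1 one_pos _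
    _ = _ := by
      simp_rw [smul_eq_mul, f, gammaPDFReal_mul_lastPassage hμ ha.le ht]
      rw [integral_const_mul, integral_indicator measurableSet_Ioi,
        ← phiBessel_eq_integral hμ.le (by positivity)]

/-- Let `R` be a Bessel process of dimension `d = 2(μ+1)`, `μ > 0`, started at `0`
(so that by scaling `R_t` has the law of `√(2t γ_{μ+1})` with `γ_{μ+1} ~ Gamma(μ+1,1)`),
and `a, t > 0`. Then
`E[(1 ∧ (a/R_t)^{2μ}) (1 − 1 ∧ (a/R_t)^{2μ})] = φ_μ(a²/(2t))`. -/
theorem expectation_bessel_last_passage_eq_phiBessel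
    {Ω : Type*} {m0 : MeasurableSpace Ω} (P : Measure Ω) [IsProbabilityMeasure P]
    (μ : ℝ) (hμ : 0 < μ) (a t : ℝ) (ha : 0 < a) (ht : 0 < t)
    (R : ℝ → Ω → ℝ) (hmeas : Measurable (R t))
    (hlaw : Measure.map (R t) P
      = Measure.map (fun x : ℝ => Real.sqrt (2 * t * x)) (gammaMeasure (μ + 1) 1)) :
    ∫ ω, (min 1 ((a / R t ω) ^ (2 * μ))) * (1 - min 1 ((a / R t ω) ^ (2 * μ))) ∂P
      = phiBessel μ (a ^ 2 / (2 * t)) :=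
  expectation_bessel_last_passage_eq_phiBessel_general (m0 := m0) P μ hμ a t ha ht R hlaw
end
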